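/- The 4-dimensional complex algebra Z_4^1 with basis e_1,...,e_4 and nonzero products [e_1,e_1]=e_2, [e_1,e_2]=e_3, [e_2,e_1]=2e_3, [e_1,e_3]=e_4, [e_2,e_2]=3e_4, [e_3,e_1]=3e_4 is a Zinbiel algebra with α(Z) = β(Z) = 2; in particular span{e_3, e_4} is an abelian ideal and Z has no 3-dimensional abelian subalgebra. -/
import Mathlib


/-- Standard basis vectors of `ℂ⁴` (0-indexed: `e 0` is `e₁`, ..., `e 3` is `e₄`). -/
noncomputable def e (i : Fin 4) : Fin 4 → ℂ := Pi.single i 1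

/-- Multiplication table of `Z₄¹`: nonzero products `[e₁,e₁]=e₂`, `[e₁,e₂]=e₃`,
`[e₂,e₁]=2e₃`, `[e₁,e₃]=e₄`, `[e₂,e₂]=3e₄`, `[e₃,e₁]=3e₄`. -/
noncomputable def T : Fin 4 → Fin 4 → (Fin 4 → ℂ) :=
  ![![e 1, e 2, e 3, 0],
    ![(2 : ℂ) • e 2, (3 : ℂ) • e 3, 0, 0],
    ![(3 : ℂ) • e 3, 0, 0, 0],
    ![0, 0, 0, 0]]

/-- `A` is a subalgebra. -/
def IsSubalg {F : Type*} [Field F] {Z : Type*} [AddCommGroup Z] [Module F Z]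
    (b : Z →ₗ[F] Z →ₗ[F] Z) (A : Submodule F Z) : Prop :=
  ∀ x ∈ A, ∀ y ∈ A, b x y ∈ A

/-- `A` is abelian. -/
def IsAbelian {F : Type*} [Field F] {Z : Type*} [AddCommGroup Z] [Module F Z]
    (b : Z →ₗ[F] Z →ₗ[F] Z) (A : Submodule F Z) : Prop :=
  ∀ x ∈ A, ∀ y ∈ A, b x y = 0

/-- `A` is a two-sided ideal. -/
def IsIdeal {F : Type*} [Field F] {Z : Type*} [AddCommGroup Z] [Module F Z]
    (b : Z →ₗ[F] Z →ₗ[F] Z) (A : Submodule F Z) : Prop :=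
  ∀ z : Z, ∀ x ∈ A, b z x ∈ A ∧ b x z ∈ A

/-- the 4-dimensional complex algebra `Z₄¹` is a Zinbiel algebra with
`α = β = 2`: `span{e₃, e₄}` is a 2-dimensional abelian ideal, and every abelian
subalgebra has dimension at most 2 (so there is no 3-dimensional abelian subalgebra). -/
theorem stmt18 (b : (Fin 4 → ℂ) →ₗ[ℂ] (Fin 4 → ℂ) →ₗ[ℂ] (Fin 4 → ℂ))
    (htable : ∀ i j : Fin 4, b (e i) (e j) = T i j) :
    (∀ x y z : Fin 4 → ℂ, b (b x y) z = b x (b y z) + b x (b z y)) ∧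
    IsIdeal b (Submodule.span ℂ {e 2, e 3}) ∧
    IsAbelian b (Submodule.span ℂ {e 2, e 3}) ∧
    Module.finrank ℂ (Submodule.span ℂ {e 2, e 3} : Submodule ℂ (Fin 4 → ℂ)) = 2 ∧
    (∀ S : Submodule ℂ (Fin 4 → ℂ), IsSubalg b S → IsAbelian b S →
      Module.finrank ℂ S ≤ 2) := by
  have hdec : ∀ x : Fin 4 → ℂ, x = x 0 • e 0 + x 1 • e 1 + x 2 • e 2 + x 3 • e 3 := by
    intro x; funext i; fin_cases i <;> simp [e, Pi.single_apply]
  have bval : ∀ x y : Fin 4 → ℂ, b x y =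
      ![0, x 0 * y 0, x 0 * y 1 + 2 * x 1 * y 0,
        x 0 * y 2 + 3 * x 1 * y 1 + 3 * x 2 * y 0] := by
    intro x y
    conv_lhs => rw [hdec x, hdec y]
    simp only [map_add, map_smul, LinearMap.add_apply, LinearMap.smul_apply, htable]
    funext i; fin_cases i <;>
      simp [T, e, Pi.single_apply, Matrix.vecHead, Matrix.vecTail] <;> ring
  -- span membership characterization
  have hmem : ∀ x : Fin 4 → ℂ,
      x ∈ Submodule.span ℂ ({e 2, e 3} : Set (Fin 4 → ℂ)) ↔ x 0 = 0 ∧ x 1 = 0 := by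
    intro x
    constructor
    · intro hx
      refine Submodule.span_induction ?_ ?_ ?_ ?_ hx
      · rintro y (rfl | rfl) <;> constructor <;> simp [e, Pi.single_apply]
      · simp
      · rintro y z _ _ ⟨h1, h2⟩ ⟨h3, h4⟩; exact ⟨by simp [h1, h3], by simp [h2, h4]⟩
      · rintro c y _ ⟨h1, h2⟩; exact ⟨by simp [h1], by simp [h2]⟩
    · rintro ⟨h0, h1⟩
      have : x = x 2 • e 2 + x 3 • e 3 := by
        conv_lhs => rw [hdec x]
        rw [h0, h1]; module
      rw [this]
      exact Submodule.add_mem _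
        (Submodule.smul_mem _ _ (Submodule.subset_span (by simp)))
        (Submodule.smul_mem _ _ (Submodule.subset_span (by simp)))
  refine ⟨?_, ?_, ?_, ?_, ?_⟩
  · intro x y z
    rw [bval (b x y) z, bval x (b y z), bval x (b z y), bval x y, bval y z, bval z y]
    funext i; fin_cases i <;> simp <;> ring
  · intro z x hx
    obtain ⟨h0, h1⟩ := (hmem x).1 hx
    constructor
    · rw [hmem, bval]; simp [h0, h1]
    · rw [hmem, bval]; simp [h0, h1]
  · intro x hx y hy
    obtain ⟨hx0, hx1⟩ := (hmem x).1 hx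
    obtain ⟨hy0, hy1⟩ := (hmem y).1 hy
    rw [bval]
    funext i; fin_cases i <;> simp [hx0, hx1, hy0, hy1]
  · have hli : LinearIndependent ℂ ![e 2, e 3] := by
      rw [LinearIndependent.pair_iff]
      intro s t hst
      have h2 := congrFun hst 2
      have h3 := congrFun hst 3
      simp [e, Pi.single_apply] at h2 h3
      exact ⟨h2, h3⟩
    have hr : Set.range ![e 2, e 3] = ({e 2, e 3} : Set (Fin 4 → ℂ)) := by
      ext x; simp [Fin.exists_fin_two, or_comm]
    have := finrank_span_eq_card (R := ℂ) hli
    rw [hr] at this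
    simpa using this
  · intro S hsub hab
    have hle : S ≤ Submodule.span ℂ ({e 2, e 3} : Set (Fin 4 → ℂ)) := by
      intro x hx
      have h := hab x hx x hx
      rw [bval] at h
      have h1 := congrFun h 1
      have h3 := congrFun h 3
      simp only [Matrix.cons_val_one, Matrix.head_cons, Pi.zero_apply,
        Matrix.cons_val_fin_one, Matrix.cons_val_succ, Matrix.cons_val_zero] at h1 h3
      have h1' : x 0 * x 0 = 0 := by simpa using h1
      have h3' : x 0 * x 2 + 3 * x 1 * x 1 + 3 * x 2 * x 0 = 0 := by simpa using h3
      have hx0 : x 0 = 0 := mul_self_eq_zero.1 h1'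
      rw [hx0] at h3'
      have hx1 : x 1 = 0 := mul_self_eq_zero.1 (by linear_combination h3' / 3)
      exact (hmem x).2 ⟨hx0, hx1⟩
    have hrank : Module.finrank ℂ
        (Submodule.span ℂ ({e 2, e 3} : Set (Fin 4 → ℂ))) = 2 := by
      have hli : LinearIndependent ℂ ![e 2, e 3] := by
        rw [LinearIndependent.pair_iff]
        intro s t hst
        have h2 := congrFun hst 2
        have h3 := congrFun hst 3
        simp [e, Pi.single_apply] at h2 h3
        exact ⟨h2, h3⟩
      have hr : Set.range ![e 2, e 3] = ({e 2, e 3} : Set (Fin 4 → ℂ)) := by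
        ext x; simp [Fin.exists_fin_two, or_comm]
      have := finrank_span_eq_card (R := ℂ) hli
      rw [hr] at this
      simpa using this
    calc Module.finrank ℂ S
        ≤ Module.finrank ℂ (Submodule.span ℂ ({e 2, e 3} : Set (Fin 4 → ℂ))) :=
          Submodule.finrank_mono hle
      _ = 2 := hrank
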